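/- For every matroid M of rank r on the ground set {1,…,n}, the element C(M) of F lies in the image of the polynomial ring ℚ[u_1,…,u_r,t_1,…,t_n] in F; that is, the a priori rational function C(M) is a polynomial in u_1,…,u_r and t_1,…,t_n. (For M realized by a rank-r matrix v, this polynomial represents the equivariant Chow class of the matrix orbit closure X_v.) -/

import Mathlib

open scoped Classical

/-- The field of rational functions `F = Frac(ℚ[u_1,…,u_r,t_1,…,t_n])`. -/
abbrev F (r n : ℕ) : Type := FractionRing (MvPolynomial (Fin r ⊕ Fin n) ℚ)

/-- The variable `u_i` viewed in `F`. -/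
noncomputable def U (r n : ℕ) (i : Fin r) : F r n :=
  algebraMap (MvPolynomial (Fin r ⊕ Fin n) ℚ) (F r n) (MvPolynomial.X (Sum.inl i))

/-- The variable `t_j` viewed in `F`. -/
noncomputable def T (r n : ℕ) (j : Fin n) : F r n :=
  algebraMap (MvPolynomial (Fin r ⊕ Fin n) ℚ) (F r n) (MvPolynomial.X (Sum.inr j))

/-- `B(w) = {w_i : w_i ∉ cl_M({w_1,…,w_{i-1}})}`, the lexicographically first basis of `M`
in the list `(w_1,…,w_n)`. -/
def firstBasis {n : ℕ} (M : Matroid (Fin n)) (w : Equiv.Perm (Fin n)) : Set (Fin n) :=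
  {x | x ∉ M.closure (⇑w '' {i | i < w.symm x})}

/-- The rational function
`C(M) = Σ_{w ∈ S_n} [∏_{j ∉ B(w)} ∏_{i=1}^{r} (u_i + t_j)] · ∏_{i=1}^{n−1} (t_{w_{i+1}} − t_{w_i})^{−1}`. -/
noncomputable def Cclass (r n : ℕ) (M : Matroid (Fin n)) : F r n :=
  ∑ w : Equiv.Perm (Fin n),
    (∏ j : Fin n, if j ∈ firstBasis M w then 1
      else ∏ i : Fin r, (U r n i + T r n j)) *
    ∏ i : Fin n, (if h : (i : ℕ) + 1 < n
      then (T r n (w ⟨(i : ℕ) + 1, h⟩) - T r n (w i))⁻¹ else 1)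

/-!
Clearing denominators by the Vandermonde product `Δ = ∏_{i<j} (t_j - t_i)`: each
`d(w) = ∏ (t_{w_{i+1}} - t_{w_i})` is, up to sign, a product of distinct factors of `Δ`, so
`C(M) = P / Δ` with `P = Σ_w N(B(w)) · Δ / d(w)` a polynomial, `N(B) = ∏_{j ∉ B} ∏_i (u_i + t_j)`.
The `t_a - t_b` are pairwise non-associated primes, so it suffices that each of them divides `P`.
Modulo `t_a - t_b`, pair `w` with `(a b) w`. Renaming `t_a ↔ t_b` negates `Δ` (a Vandermonde
determinant) and sends `d(w)` to `d((a b) w)`, so the two cofactors agree up to sign; they vanish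
unless `a, b` are adjacent in `w`. For adjacent `a, b` the exchange property of the closure shows
that `B((a b) w)` is `B(w)` or `(a b) B(w)`, so the two values of `N` agree modulo `t_a - t_b` and
the two terms cancel.
-/

open MvPolynomial Finset Equiv

theorem Finset.prod_dvd_of_prime_of_pairwise_not_dvd {ι M₀ : Type*} [CommMonoidWithZero M₀]
    [IsCancelMulZero M₀] {s : Finset ι} {f : ι → M₀} {a : M₀}
    (hprime : ∀ i ∈ s, Prime (f i)) (hdvd : ∀ i ∈ s, f i ∣ a)
    (hndvd : (s : Set ι).Pairwise fun i j => ¬ f i ∣ f j) : ∏ i ∈ s, f i ∣ a := by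
  induction s using Finset.induction_on generalizing a with
  | empty => simp
  | insert b s hb ih =>
    rw [prod_insert hb]
    obtain ⟨c, rfl⟩ := hdvd b (mem_insert_self b s)
    refine mul_dvd_mul_left _ (ih (fun i hi => hprime i (mem_insert_of_mem hi)) (fun i hi => ?_)
      (hndvd.mono (by simp)))
    have hib : i ≠ b := by rintro rfl; exact hb hi
    exact ((hprime i (mem_insert_of_mem hi)).dvd_or_dvd
      (hdvd i (mem_insert_of_mem hi))).resolve_left (hndvd (by simp [hi]) (by simp) hib)

namespace MvPolynomial

variable {R σ : Type*} [CommRing R]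

theorem prime_X_sub_X [IsDomain R] {i j : σ} (h : i ≠ j) :
    Prime (X i - X j : MvPolynomial σ R) := by
  let e : MvPolynomial σ R ≃ₐ[R] Polynomial (MvPolynomial {k : σ // k ≠ i} R) :=
    (renameEquiv R (Equiv.optionSubtypeNe i).symm).trans (optionEquivLeft R _)
  have hi : e (X i) = Polynomial.X := by
    simp [e, optionEquivLeft_X_none]
  have hj : e (X j) = Polynomial.C (X ⟨j, h.symm⟩) := by
    simp [e, Equiv.optionSubtypeNe_symm_of_ne h.symm, optionEquivLeft_X_some]
  have key : Prime (e (X i - X j)) := by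
    rw [map_sub, hi, hj]
    exact Polynomial.prime_X_sub_C _
  exact (MulEquiv.prime_iff e.toMulEquiv).mp key

theorem eq_and_eq_or_eq_and_eq_of_X_sub_X_dvd [Nontrivial R] {i j k l : σ} (hkl : k ≠ l)
    (h : (X i - X j : MvPolynomial σ R) ∣ X k - X l) : k = i ∧ l = j ∨ k = j ∧ l = i := by
  -- substituting `j` for `i` kills `X i - X j`, hence also `X k - X l`
  let f : σ → σ := fun v => if v = i then j else v
  have hf : f k = f l := by
    obtain ⟨c, hc⟩ := h
    have := congrArg (rename (R := R) f) hc
    simp only [map_sub, rename_X, map_mul, f, ↓reduceIte, ite_self, sub_self, zero_mul,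
      sub_eq_zero] at this
    exact X_injective this
  simp only [f] at hf
  split_ifs at hf <;> grind

theorem mk_rename_swap [DecidableEq σ] {i j : σ} (p : MvPolynomial σ R) :
    Ideal.Quotient.mk (Ideal.span {X i - X j}) (rename (swap i j) p) =
      Ideal.Quotient.mk (Ideal.span {X i - X j}) p := by
  change (Ideal.Quotient.mkₐ R _).comp (rename (swap i j)) p = Ideal.Quotient.mkₐ R _ p
  congr 1
  refine algHom_ext fun v => ?_
  simp only [AlgHom.comp_apply, rename_X, Ideal.Quotient.mkₐ_eq_mk, swap_apply_def]
  split_ifs with hi hj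
  · subst hi
    exact (Ideal.Quotient.eq.mpr (by simp)).symm
  · subst hj
    exact Ideal.Quotient.eq.mpr (Ideal.mem_span_singleton_self _)
  · rfl

end MvPolynomial

theorem Equiv.swap_image_eq_self {α : Type*} [DecidableEq α] {s : Set α} {i j : α}
    (h : i ∈ s ↔ j ∈ s) : swap i j '' s = s := by
  ext x
  rw [Equiv.image_eq_preimage_symm, symm_swap, Set.mem_preimage, swap_apply_def]
  split_ifs with hi hj
  · exact hi ▸ h.symm
  · exact hj ▸ h
  · rfl

theorem Matroid.mem_closure_insert_swap_cases {α : Type*} (M : Matroid α) (S : Set α)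
    (x y : α) :
    ((x ∈ M.closure S ↔ x ∈ M.closure (insert y S)) ∧
      (y ∈ M.closure (insert x S) ↔ y ∈ M.closure S)) ∨
    ((x ∈ M.closure (insert y S) ↔ y ∈ M.closure (insert x S)) ∧
      (y ∈ M.closure S ↔ x ∈ M.closure S)) := by
  by_cases hx : x ∈ M.closure S
  · left
    rw [M.closure_insert_eq_of_mem_closure hx]
    exact ⟨iff_of_true hx (M.closure_subset_closure (Set.subset_insert y S) hx), Iff.rfl⟩
  by_cases hy : y ∈ M.closure S
  · left
    rw [M.closure_insert_eq_of_mem_closure hy]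
    exact ⟨Iff.rfl, iff_of_true (M.closure_subset_closure (Set.subset_insert x S) hy) hy⟩
  right
  exact ⟨⟨fun h => (M.closure_exchange ⟨h, hx⟩).1,
    fun h => (M.closure_exchange ⟨h, hy⟩).1⟩, iff_of_false hy hx⟩

theorem Fin.swap_image_Iio_of_ne {n : ℕ} {p q k : Fin n} (hpq : (q : ℕ) = p + 1)
    (hk : k ≠ q) :
    swap p q '' Set.Iio k = Set.Iio k :=
  swap_image_eq_self (by simp only [Set.mem_Iio, Fin.lt_def]; grind)

theorem Fin.Iio_eq_insert_of_val_eq_succ {n : ℕ} {p q : Fin n} (hpq : (q : ℕ) = p + 1) :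
    Set.Iio q = insert p (Set.Iio p) := by
  ext k
  simp only [Set.mem_Iio, Set.mem_insert_iff, Fin.lt_def, Fin.ext_iff]
  omega

section firstBasis

variable {n : ℕ} (M : Matroid (Fin n)) (w : Perm (Fin n))

theorem mem_firstBasis_iff {x : Fin n} :
    x ∈ firstBasis M w ↔ x ∉ M.closure (w '' Set.Iio (w.symm x)) := Iff.rfl

theorem mem_firstBasis_mul_swap_iff {p q x : Fin n} :
    x ∈ firstBasis M (w * swap p q) ↔
      x ∉ M.closure (w '' (swap p q '' Set.Iio (swap p q (w.symm x)))) := by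
  rw [mem_firstBasis_iff, Perm.coe_mul, Set.image_comp]
  rfl

theorem mem_firstBasis_mul_swap_iff_of_ne {p q x : Fin n} (hpq : (q : ℕ) = p + 1)
    (hxp : x ≠ w p) (hxq : x ≠ w q) :
    x ∈ firstBasis M (w * swap p q) ↔ x ∈ firstBasis M w := by
  have hp : w.symm x ≠ p := by rintro rfl; simp at hxp
  have hq : w.symm x ≠ q := by rintro rfl; simp at hxq
  rw [mem_firstBasis_mul_swap_iff, swap_apply_of_ne_of_ne hp hq, Fin.swap_image_Iio_of_ne hpq hq,
    mem_firstBasis_iff]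

theorem firstBasis_swap_mul_of_val_eq_succ {p q : Fin n} (hpq : (q : ℕ) = p + 1) :
    firstBasis M (swap (w p) (w q) * w) = firstBasis M w ∨
      firstBasis M (swap (w p) (w q) * w) = swap (w p) (w q) '' firstBasis M w := by
  have hpq' : p ≠ q := by rintro rfl; omega
  set S := w '' Set.Iio p
  rw [← mul_swap_eq_swap_mul]
  have hx' : w p ∈ firstBasis M (w * swap p q) ↔ w p ∉ M.closure (insert (w q) S) := by
    rw [mem_firstBasis_mul_swap_iff, symm_apply_apply, swap_apply_left,
      Fin.Iio_eq_insert_of_val_eq_succ hpq, Set.image_insert_eq, swap_apply_left,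
      Fin.swap_image_Iio_of_ne hpq hpq', Set.image_insert_eq]
  have hx : w p ∈ firstBasis M w ↔ w p ∉ M.closure S := by
    rw [mem_firstBasis_iff, symm_apply_apply]
  have hy' : w q ∈ firstBasis M (w * swap p q) ↔ w q ∉ M.closure S := by
    rw [mem_firstBasis_mul_swap_iff, symm_apply_apply, swap_apply_right,
      Fin.swap_image_Iio_of_ne hpq hpq']
  have hy : w q ∈ firstBasis M w ↔ w q ∉ M.closure (insert (w p) S) := by
    rw [mem_firstBasis_iff, symm_apply_apply, Fin.Iio_eq_insert_of_val_eq_succ hpq,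
      Set.image_insert_eq]
  rcases M.mem_closure_insert_swap_cases S (w p) (w q) with h | h
  · left
    ext x
    by_cases hxp : x = w p
    · rw [hxp, hx', hx, h.1]
    by_cases hxq : x = w q
    · rw [hxq, hy', hy, h.2]
    exact mem_firstBasis_mul_swap_iff_of_ne M w hpq hxp hxq
  · right
    ext x
    rw [image_eq_preimage_symm, symm_swap, Set.mem_preimage]
    by_cases hxp : x = w p
    · rw [hxp, swap_apply_left, hx', hy, h.1]
    by_cases hxq : x = w q
    · rw [hxq, swap_apply_right, hy', hx, h.2]
    rw [swap_apply_of_ne_of_ne hxp hxq]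
    exact mem_firstBasis_mul_swap_iff_of_ne M w hpq hxp hxq

end firstBasis

abbrev Pol (r n : ℕ) : Type := MvPolynomial (Fin r ⊕ Fin n) ℚ

noncomputable def vandermondeProd (r n : ℕ) : Pol r n :=
  ∏ i : Fin n, ∏ j ∈ Ioi i, (X (.inr j) - X (.inr i))

section

variable {r n : ℕ}

variable (r) in
noncomputable def consecutiveDiff (w : Perm (Fin n)) (i : Fin n) : Pol r n :=
  if h : (i : ℕ) + 1 < n then X (.inr (w ⟨i + 1, h⟩)) - X (.inr (w i)) else 1

variable (r) in
noncomputable def nonbasisProd (B : Set (Fin n)) : Pol r n :=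
  ∏ j, if j ∈ B then 1 else ∏ i : Fin r, (X (.inl i) + X (.inr j))

theorem rename_swap_vandermondeProd {a b : Fin n} (hab : a ≠ b) :
    rename (swap (Sum.inr a) (Sum.inr b)) (vandermondeProd r n) = -vandermondeProd r n := by
  have hdet : vandermondeProd r n = (Matrix.vandermonde fun j => (X (.inr j) : Pol r n)).det :=
    (Matrix.det_vandermonde _).symm
  have hperm : (rename (swap (Sum.inr a) (Sum.inr b))).mapMatrix
      (Matrix.vandermonde fun j => (X (.inr j) : Pol r n)) =
      (Matrix.vandermonde fun j => X (.inr j)).submatrix (swap a b) id := by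
    refine Matrix.ext fun i k => ?_
    simp [Matrix.vandermonde_apply, ← Sum.inr_injective.map_swap]
  rw [hdet, AlgHom.map_det, hperm, Matrix.det_permute, Perm.sign_swap hab]
  simp

theorem rename_swap_consecutiveDiff (a b : Fin n) (w : Perm (Fin n)) (i : Fin n) :
    rename (swap (Sum.inr a) (Sum.inr b)) (consecutiveDiff r w i) =
      consecutiveDiff r (swap a b * w) i := by
  unfold consecutiveDiff
  split_ifs <;> simp [← Sum.inr_injective.map_swap]

theorem prime_consecutiveDiff (w : Perm (Fin n)) {i : Fin n} (hi : (i : ℕ) + 1 < n) :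
    Prime (consecutiveDiff r w i) := by
  rw [consecutiveDiff, dif_pos hi]
  exact prime_X_sub_X (by simp [Fin.ext_iff])

theorem X_sub_X_dvd_vandermondeProd {a b : Fin n} (hab : a ≠ b) :
    (X (.inr a) - X (.inr b) : Pol r n) ∣ vandermondeProd r n := by
  have hmem {i j : Fin n} (hij : i < j) :
      (X (.inr j) - X (.inr i) : Pol r n) ∣ vandermondeProd r n := by
    have h1 := dvd_prod_of_mem (fun j => (X (.inr j) - X (.inr i) : Pol r n)) (mem_Ioi.mpr hij)
    have h2 := dvd_prod_of_mem
      (fun i => ∏ j ∈ Ioi i, (X (.inr j) - X (.inr i) : Pol r n)) (mem_univ i)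
    exact h1.trans h2
  rcases hab.lt_or_gt with h | h
  · have := (hmem h).neg_left
    rwa [neg_sub] at this
  · exact hmem h

theorem prod_consecutiveDiff_dvd_vandermondeProd (w : Perm (Fin n)) :
    ∏ i, consecutiveDiff r w i ∣ vandermondeProd r n := by
  rw [← prod_filter_of_ne (p := fun i : Fin n => (i : ℕ) + 1 < n)
    fun i _ h => by by_contra hi; exact h (dif_neg hi)]
  refine prod_dvd_of_prime_of_pairwise_not_dvd
    (fun i hi => prime_consecutiveDiff w (by simpa using hi)) (fun i hi => ?_)
    fun i hi j hj hij hdvd => ?_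
  · rw [consecutiveDiff, dif_pos (by simpa using hi)]
    exact X_sub_X_dvd_vandermondeProd (by simp [Fin.ext_iff])
  · simp only [mem_coe, mem_filter, mem_univ, true_and] at hi hj
    rw [consecutiveDiff, consecutiveDiff, dif_pos hi, dif_pos hj] at hdvd
    have := eq_and_eq_or_eq_and_eq_of_X_sub_X_dvd (by simp [Fin.ext_iff]) hdvd
    simp only [Sum.inr.injEq, w.injective.eq_iff, Fin.ext_iff] at this
    omega

theorem prod_consecutiveDiff_ne_zero (w : Perm (Fin n)) : ∏ i, consecutiveDiff r w i ≠ 0 := by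
  refine prod_ne_zero_iff.mpr fun i _ => ?_
  by_cases hi : (i : ℕ) + 1 < n
  · exact (prime_consecutiveDiff w hi).ne_zero
  · simp [consecutiveDiff, hi]

variable (r) in
noncomputable def cofactor (w : Perm (Fin n)) : Pol r n :=
  (prod_consecutiveDiff_dvd_vandermondeProd (r := r) w).choose

theorem vandermondeProd_eq_prod_mul_cofactor (w : Perm (Fin n)) :
    vandermondeProd r n = (∏ i, consecutiveDiff r w i) * cofactor r w :=
  (prod_consecutiveDiff_dvd_vandermondeProd w).choose_spec

theorem rename_swap_cofactor {a b : Fin n} (hab : a ≠ b) (w : Perm (Fin n)) :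
    rename (swap (Sum.inr a) (Sum.inr b)) (cofactor r w) = -cofactor r (swap a b * w) := by
  refine mul_left_cancel₀ (prod_consecutiveDiff_ne_zero (swap a b * w)) ?_
  have h := congrArg (rename (swap (Sum.inr a) (Sum.inr b)))
    (vandermondeProd_eq_prod_mul_cofactor (r := r) w)
  simp only [rename_swap_vandermondeProd hab, map_mul, map_prod, rename_swap_consecutiveDiff] at h
  rw [← h, vandermondeProd_eq_prod_mul_cofactor (swap a b * w), mul_neg]

theorem rename_swap_nonbasisProd (a b : Fin n) (B : Set (Fin n)) :
    rename (swap (Sum.inr a) (Sum.inr b)) (nonbasisProd r B) = nonbasisProd r (swap a b '' B) := by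
  rw [nonbasisProd, nonbasisProd, map_prod, ← Equiv.prod_comp (swap a b)]
  refine prod_congr rfl fun j _ => ?_
  rw [image_eq_preimage_symm, symm_swap, Set.mem_preimage, apply_ite (rename _), map_one]
  split_ifs
  · rfl
  · simp [swap_apply_of_ne_of_ne Sum.inl_ne_inr Sum.inl_ne_inr, ← Sum.inr_injective.map_swap]

theorem dvd_cofactor_of_not_dvd {a b : Fin n} (hab : a ≠ b) {w : Perm (Fin n)}
    (h : ¬ (X (.inr a) - X (.inr b) : Pol r n) ∣ ∏ i, consecutiveDiff r w i) :
    (X (.inr a) - X (.inr b) : Pol r n) ∣ cofactor r w := by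
  have hdvd := X_sub_X_dvd_vandermondeProd (r := r) hab
  rw [vandermondeProd_eq_prod_mul_cofactor w] at hdvd
  exact ((prime_X_sub_X (by simpa using hab)).dvd_or_dvd hdvd).resolve_left h

theorem exists_adjacent_swap_eq_of_dvd {a b : Fin n} (hab : a ≠ b) {w : Perm (Fin n)}
    (h : (X (.inr a) - X (.inr b) : Pol r n) ∣ ∏ i, consecutiveDiff r w i) :
    ∃ p q : Fin n, (q : ℕ) = p + 1 ∧ swap a b = swap (w p) (w q) := by
  have hprime : Prime (X (.inr a) - X (.inr b) : Pol r n) := prime_X_sub_X (by simpa using hab)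
  obtain ⟨i, -, hi⟩ := hprime.exists_mem_finset_dvd h
  by_cases hin : (i : ℕ) + 1 < n
  · rw [consecutiveDiff, dif_pos hin] at hi
    refine ⟨i, ⟨i + 1, hin⟩, rfl, ?_⟩
    rcases eq_and_eq_or_eq_and_eq_of_X_sub_X_dvd (by simp [Fin.ext_iff]) hi with
      ⟨h1, h2⟩ | ⟨h1, h2⟩
    · rw [Sum.inr_injective h1, Sum.inr_injective h2, swap_comm]
    · rw [Sum.inr_injective h1, Sum.inr_injective h2]
  · rw [consecutiveDiff, dif_neg hin] at hi
    exact absurd hi hprime.not_dvd_one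

variable (r) in
noncomputable def cclassNumerator (M : Matroid (Fin n)) : Pol r n :=
  ∑ w, nonbasisProd r (firstBasis M w) * cofactor r w

theorem X_sub_X_dvd_cclassNumerator (M : Matroid (Fin n)) {a b : Fin n} (hab : a ≠ b) :
    (X (.inr a) - X (.inr b) : Pol r n) ∣ cclassNumerator r M := by
  set π := Ideal.Quotient.mk (Ideal.span {(X (.inr a) - X (.inr b) : Pol r n)})
  have hπ (p : Pol r n) : π p = 0 ↔ (X (.inr a) - X (.inr b) : Pol r n) ∣ p :=
    Ideal.Quotient.eq_zero_iff_dvd _ _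
  rw [← hπ, cclassNumerator, map_sum]
  refine sum_involution (fun w _ => swap a b * w) (fun w _ => ?_) (fun w _ _ => ?_)
    (fun _ _ => mem_univ _) (fun w _ => swap_mul_self_mul a b w)
  · have hcof : π (cofactor r (swap a b * w)) = -π (cofactor r w) := by
      rw [← neg_neg (cofactor r (swap a b * w)), ← rename_swap_cofactor hab, map_neg,
        mk_rename_swap]
    by_cases hd : (X (.inr a) - X (.inr b) : Pol r n) ∣ ∏ i, consecutiveDiff r w i
    · have hN : π (nonbasisProd r (firstBasis M (swap a b * w))) =
          π (nonbasisProd r (firstBasis M w)) := by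
        obtain ⟨p, q, hpq, hswap⟩ := exists_adjacent_swap_eq_of_dvd hab hd
        rcases firstBasis_swap_mul_of_val_eq_succ M w hpq with h | h
        · rw [hswap, h]
        · rw [hswap, h, ← hswap, ← rename_swap_nonbasisProd, mk_rename_swap]
      rw [map_mul, map_mul, hN, hcof]
      ring
    · rw [map_mul, map_mul, hcof, (hπ _).mpr (dvd_cofactor_of_not_dvd hab hd)]
      ring
  · rw [Ne, mul_eq_right, swap_eq_one_iff]
    exact hab

theorem vandermondeProd_dvd_cclassNumerator (M : Matroid (Fin n)) :
    vandermondeProd r n ∣ cclassNumerator r M := by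
  rw [vandermondeProd, prod_sigma']
  refine prod_dvd_of_prime_of_pairwise_not_dvd
    (fun x hx => prime_X_sub_X (by simpa using (mem_Ioi.mp (mem_sigma.mp hx).2).ne'))
    (fun x hx => X_sub_X_dvd_cclassNumerator M (mem_Ioi.mp (mem_sigma.mp hx).2).ne')
    fun x hx y hy hxy hdvd => hxy ?_
  have hx' := mem_Ioi.mp (mem_sigma.mp hx).2
  have hy' := mem_Ioi.mp (mem_sigma.mp hy).2
  rcases eq_and_eq_or_eq_and_eq_of_X_sub_X_dvd (by simpa using hy'.ne') hdvd with
    ⟨h1, h2⟩ | ⟨h1, h2⟩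
  · exact Sigma.ext (Sum.inr_injective h2).symm (heq_of_eq (Sum.inr_injective h1).symm)
  · rw [Sum.inr_injective h1, Sum.inr_injective h2] at hy'
    exact absurd (hx'.trans hy') (lt_irrefl _)

theorem vandermondeProd_ne_zero : vandermondeProd r n ≠ 0 :=
  prod_ne_zero_iff.mpr fun _ _ => prod_ne_zero_iff.mpr fun _ hj =>
    (prime_X_sub_X (by simpa using (mem_Ioi.mp hj).ne')).ne_zero

theorem Cclass_eq_sum (M : Matroid (Fin n)) :
    Cclass r n M = ∑ w, algebraMap (Pol r n) (F r n) (nonbasisProd r (firstBasis M w)) /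
      algebraMap (Pol r n) (F r n) (∏ i, consecutiveDiff r w i) := by
  refine sum_congr rfl fun w _ => ?_
  rw [div_eq_mul_inv, nonbasisProd, map_prod, map_prod, ← prod_inv_distrib]
  congr 1 <;> refine prod_congr rfl fun j _ => ?_
  · split_ifs <;> simp [U, T]
  · rw [consecutiveDiff]
    split_ifs <;> simp [T]

theorem Cclass_mul_vandermondeProd (M : Matroid (Fin n)) :
    Cclass r n M * algebraMap (Pol r n) (F r n) (vandermondeProd r n) =
      algebraMap (Pol r n) (F r n) (cclassNumerator r M) := by
  rw [Cclass_eq_sum, sum_mul, cclassNumerator, map_sum]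
  refine sum_congr rfl fun w _ => ?_
  have hne : algebraMap (Pol r n) (F r n) (∏ i, consecutiveDiff r w i) ≠ 0 :=
    (map_ne_zero_iff _ (IsFractionRing.injective _ _)).mpr (prod_consecutiveDiff_ne_zero w)
  rw [vandermondeProd_eq_prod_mul_cofactor w, map_mul, map_mul]
  field_simp

end

theorem Cclass_is_polynomial_general (r n : ℕ) (M : Matroid (Fin n)) :
    ∃ p : MvPolynomial (Fin r ⊕ Fin n) ℚ,
      algebraMap (MvPolynomial (Fin r ⊕ Fin n) ℚ) (F r n) p = Cclass r n M := by
  obtain ⟨p, hp⟩ := vandermondeProd_dvd_cclassNumerator (r := r) M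
  have hne : algebraMap (Pol r n) (F r n) (vandermondeProd r n) ≠ 0 :=
    (map_ne_zero_iff _ (IsFractionRing.injective _ _)).mpr vandermondeProd_ne_zero
  refine ⟨p, mul_right_cancel₀ hne ?_⟩
  rw [Cclass_mul_vandermondeProd, hp, map_mul, mul_comm]

/-- For every matroid `M` of rank `r` on `{1,…,n}`, the a priori rational function `C(M)`
is a polynomial in `u_1,…,u_r` and `t_1,…,t_n`. -/
theorem Cclass_is_polynomial (r n : ℕ) (hr : 1 ≤ r) (hrn : r ≤ n)
    (M : Matroid (Fin n)) (hE : M.E = Set.univ)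
    (hrank : ∀ B : Set (Fin n), M.IsBase B → B.ncard = r) :
    ∃ p : MvPolynomial (Fin r ⊕ Fin n) ℚ,
      algebraMap (MvPolynomial (Fin r ⊕ Fin n) ℚ) (F r n) p = Cclass r n M :=
  Cclass_is_polynomial_general r n M
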